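/- The product state |φ₁₀⟩ = |2⟩ ⊗ (|0⟩+|2⟩−|3⟩−|4⟩) in ℂ³⊗ℂ⁵ is orthogonal to each of the nine states |φ₁⟩,…,|φ₉⟩ of the 3⊗5 construction; hence that set of nine orthogonal product states is extendible (not an unextendible product basis). -/

import Mathlib

open scoped InnerProductSpace ComplexOrder
open Matrix

noncomputable def bket (n : ℕ) (hn : 0 < n) (k : ℕ) : EuclideanSpace ℂ (Fin n) :=
  EuclideanSpace.single ⟨k % n, Nat.mod_lt _ hn⟩ 1

noncomputable def bpm (n : ℕ) (hn : 0 < n) (s : ℂ) (e f : ℕ) : EuclideanSpace ℂ (Fin n) :=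
  (Real.sqrt 2 : ℂ)⁻¹ • (bket n hn e + s • bket n hn f)

noncomputable def tp {m n : ℕ} (a : EuclideanSpace ℂ (Fin m)) (b : EuclideanSpace ℂ (Fin n)) :
    EuclideanSpace ℂ (Fin m × Fin n) :=
  WithLp.toLp 2 (fun p : Fin m × Fin n => a p.1 * b p.2)


/-- The nine product states of the 3⊗5 construction (Eq. (4) of the paper). -/
noncomputable def phi35 : Fin 9 → EuclideanSpace ℂ (Fin 3 × Fin 5) :=
  ![tp (bket 3 (by norm_num) 1) (bpm 5 (by norm_num) (-1) 0 1),
    tp (bket 3 (by norm_num) 2) (bpm 5 (by norm_num) (-1) 0 2),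
    tp (bpm 3 (by norm_num) (-1) 0 1) (bket 5 (by norm_num) 2),
    tp (bpm 3 (by norm_num) (-1) 0 2) (bket 5 (by norm_num) 1),
    tp (bpm 3 (by norm_num) (-1) 0 1) (bket 5 (by norm_num) 3),
    tp (bpm 3 (by norm_num) (-1) 0 1) (bket 5 (by norm_num) 4),
    tp (bpm 3 (by norm_num) 1 0 1) (bpm 5 (by norm_num) (-1) 2 4),
    tp (bket 3 (by norm_num) 2) (bpm 5 (by norm_num) (-1) 3 4),
    tp ((Real.sqrt 3 : ℂ)⁻¹ • (bket 3 (by norm_num) 0 + bket 3 (by norm_num) 1 + bket 3 (by norm_num) 2))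
       ((Real.sqrt 5 : ℂ)⁻¹ • (bket 5 (by norm_num) 0 + bket 5 (by norm_num) 1 + bket 5 (by norm_num) 2 +
         bket 5 (by norm_num) 3 + bket 5 (by norm_num) 4))]

/-- |φ₁₀⟩ = |2⟩ ⊗ (|0⟩+|2⟩−|3⟩−|4⟩). -/
noncomputable def phi10 : EuclideanSpace ℂ (Fin 3 × Fin 5) :=
  tp (bket 3 (by norm_num) 2)
     (bket 5 (by norm_num) 0 + bket 5 (by norm_num) 2 - bket 5 (by norm_num) 3 - bket 5 (by norm_num) 4)


@[simp] lemma phi35_0 : phi35 0 = tp (bket 3 (by norm_num) 1) (bpm 5 (by norm_num) (-1) 0 1) := rfl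
@[simp] lemma phi35_1 : phi35 1 = tp (bket 3 (by norm_num) 2) (bpm 5 (by norm_num) (-1) 0 2) := rfl
@[simp] lemma phi35_2 : phi35 2 = tp (bpm 3 (by norm_num) (-1) 0 1) (bket 5 (by norm_num) 2) := rfl
@[simp] lemma phi35_3 : phi35 3 = tp (bpm 3 (by norm_num) (-1) 0 2) (bket 5 (by norm_num) 1) := rfl
@[simp] lemma phi35_4 : phi35 4 = tp (bpm 3 (by norm_num) (-1) 0 1) (bket 5 (by norm_num) 3) := rfl
@[simp] lemma phi35_5 : phi35 5 = tp (bpm 3 (by norm_num) (-1) 0 1) (bket 5 (by norm_num) 4) := rfl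
@[simp] lemma phi35_6 : phi35 6 = tp (bpm 3 (by norm_num) 1 0 1) (bpm 5 (by norm_num) (-1) 2 4) := rfl
@[simp] lemma phi35_7 : phi35 7 = tp (bket 3 (by norm_num) 2) (bpm 5 (by norm_num) (-1) 3 4) := rfl
@[simp] lemma phi35_8 : phi35 8 = tp ((Real.sqrt 3 : ℂ)⁻¹ • (bket 3 (by norm_num) 0 + bket 3 (by norm_num) 1 + bket 3 (by norm_num) 2))
    ((Real.sqrt 5 : ℂ)⁻¹ • (bket 5 (by norm_num) 0 + bket 5 (by norm_num) 1 + bket 5 (by norm_num) 2 +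
      bket 5 (by norm_num) 3 + bket 5 (by norm_num) 4)) := rfl

set_option maxHeartbeats 4000000 in
/-- |φ₁₀⟩ is a nonzero product vector orthogonal to each of the nine states of the
3⊗5 construction; hence that set is extendible (not an unextendible product basis). -/
theorem nine_states_extendible :
    (∀ i : Fin 9, ⟪phi35 i, phi10⟫_ℂ = 0) ∧ phi10 ≠ 0 := by
  constructor
  · intro i
    fin_cases i <;>
    · rw [show (inner (𝕜 := ℂ)) = fun x y : EuclideanSpace ℂ (Fin 3 × Fin 5) => ∑ p, (starRingEnd ℂ) (x p) * y p from funext fun x => funext fun y => (PiLp.inner_apply x y).trans (Finset.sum_congr rfl fun p _ => RCLike.inner_apply' _ _)]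
      simp (config := { decide := true }) [phi10, tp, bpm, bket, Fintype.sum_prod_type,
        Fin.sum_univ_three, Fin.sum_univ_five, EuclideanSpace.single_apply,
        Complex.conj_ofReal]
      try ring_nf
  · intro h
    have h2 := congrArg (fun v : EuclideanSpace ℂ (Fin 3 × Fin 5) => v (⟨2, by norm_num⟩, ⟨0, by norm_num⟩)) h
    simp (config := { decide := true }) [phi10, tp, bket, EuclideanSpace.single_apply] at h2
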